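/- arXiv:2302.04606 — 4 statements merged into one kernel-verified Lean document; each statement's English description precedes it below -/
import Mathlib

section
/- Let p, n be natural numbers, let σ and σ' be types of variables, and let w : Fin p → MvPolynomial σ ℝ and r : Fin p → Fin p → MvPolynomial σ ℝ with r symmetric (r i j = r j i), and similarly w' : Fin p → MvPolynomial σ' ℝ, r' : Fin p → Fin p → MvPolynomial σ' ℝ with r' symmetric. Suppose there exist a bijection f : Fin p ≃ Fin p and a bijection of variables g : σ ≃ σ' such that w' i = rename g (w (f i)) for all i and r' i j = rename g (r (f i) (f j)) for all i, j. Then F(n, w', r') = rename g (F(n, w, r)), where F is the WFOMC sum computed in the polynomial ring. In particular, for every monomial m over σ, the coefficient of the g-renamed monomial in F(n, w', r') equals the coefficient of m in F(n, w, r), so two C² sentences whose cell graphs with cardinality constraints are isomorphic have equal weighted first-order model counts on every domain size. -/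
open Finset

/-- The WFOMC sum determined by a cell graph with vertex weights `w` and edge weights `r`,
valued in a commutative ring `R`. -/
noncomputable def wfomcSum {R : Type*} [CommRing R] (p n : ℕ)
    (w : Fin p → R) (r : Fin p → Fin p → R) : R :=
  ∑ k ∈ Finset.Nat.antidiagonalTuple p n,
    (Nat.multinomial Finset.univ k : R) *
      (∏ ij ∈ Finset.univ.filter fun ij : Fin p × Fin p => ij.1 < ij.2,
        r ij.1 ij.2 ^ (k ij.1 * k ij.2)) *
      (∏ i, r i i ^ (k i).choose 2) * (∏ i, w i ^ k i)

/-!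
Relabelling the cells by `f` only permutes the cardinality vectors `k` summed over, and each
factor of a summand is invariant under that permutation; for the product over pairs `i < j` this
is where the symmetry of `r` enters, since `f` may reverse the order of a pair. Renaming the
variables by `g` is a ring homomorphism, so it commutes with the whole sum, and it is injective on
monomials, which gives the coefficient identity.
-/

theorem Finset.prod_filter_lt_comp_perm {ι M : Type*} [LinearOrder ι] [Fintype ι] [CommMonoid M]
    (h : ι → ι → M) (hh : ∀ i j, h i j = h j i) (e : ι ≃ ι) :
    ∏ ij ∈ univ.filter (fun ij : ι × ι => ij.1 < ij.2), h (e ij.1) (e ij.2) =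
      ∏ ij ∈ univ.filter (fun ij : ι × ι => ij.1 < ij.2), h ij.1 ij.2 := by
  have h_minMax : ∀ a b, h (min a b) (max a b) = h a b := fun a b => by
    rcases le_total a b with hab | hab <;> simp [hab, hh a]
  -- sorting the relabelled pair is a bijection of `{i < j}`, inverted by sorting along `e.symm`
  refine prod_nbij' (fun ij => (min (e ij.1) (e ij.2), max (e ij.1) (e ij.2)))
    (fun ij => (min (e.symm ij.1) (e.symm ij.2), max (e.symm ij.1) (e.symm ij.2)))
    ?_ ?_ ?_ ?_ fun ij _ => (h_minMax _ _).symm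
  all_goals
    rintro ⟨i, j⟩ hij
    simp only [mem_filter, mem_univ, true_and] at hij ⊢
  · exact min_lt_max.2 (e.injective.ne hij.ne)
  · exact min_lt_max.2 (e.symm.injective.ne hij.ne)
  · rcases le_total (e i) (e j) with hle | hle <;> simp [hle, hij.le]
  · rcases le_total (e.symm i) (e.symm j) with hle | hle <;> simp [hle, hij.le]

theorem Nat.multinomial_univ_comp_equiv {ι : Type*} [Fintype ι] (k : ι → ℕ) (e : ι ≃ ι) :
    Nat.multinomial univ (k ∘ e) = Nat.multinomial univ k := by
  simp only [Nat.multinomial, Function.comp_apply, e.sum_comp k,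
    e.prod_comp fun i => (k i).factorial]

theorem wfomcSum_comp_perm {R : Type*} [CommRing R] (p n : ℕ) (w : Fin p → R)
    (r : Fin p → Fin p → R) (hr : ∀ i j, r i j = r j i) (e : Fin p ≃ Fin p) :
    wfomcSum p n (fun i => w (e i)) (fun i j => r (e i) (e j)) = wfomcSum p n w r := by
  symm
  have hcomp : ∀ k, e.symm.arrowCongr (Equiv.refl ℕ) k = k ∘ e := fun _ => rfl
  refine sum_equiv (e.symm.arrowCongr (Equiv.refl ℕ)) (fun k => ?_) fun k _ => ?_
  · simp only [hcomp, Nat.mem_antidiagonalTuple, Function.comp_apply, e.sum_comp k]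
  · simp only [hcomp, Nat.multinomial_univ_comp_equiv, Function.comp_apply,
      prod_filter_lt_comp_perm (fun i j => r i j ^ (k i * k j)) (fun i j => by rw [hr, mul_comm]),
      e.prod_comp fun i => r i i ^ (k i).choose 2, e.prod_comp fun i => w i ^ k i]

theorem map_wfomcSum {R S F : Type*} [CommRing R] [CommRing S] [FunLike F R S]
    [RingHomClass F R S] (φ : F) (p n : ℕ) (w : Fin p → R) (r : Fin p → Fin p → R) :
    φ (wfomcSum p n w r) = wfomcSum p n (fun i => φ (w i)) (fun i j => φ (r i j)) := by
  simp only [wfomcSum, map_sum, map_mul, map_prod, map_pow, map_natCast]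

theorem wfomc_eq_of_symbolic_cellGraph_iso_general {σ σ' : Type*} (p n : ℕ)
    (w : Fin p → MvPolynomial σ ℝ) (r : Fin p → Fin p → MvPolynomial σ ℝ)
    (w' : Fin p → MvPolynomial σ' ℝ) (r' : Fin p → Fin p → MvPolynomial σ' ℝ)
    (hr : ∀ i j, r i j = r j i)
    (f : Fin p ≃ Fin p) (g : σ ≃ σ')
    (hw : ∀ i, w' i = MvPolynomial.rename g (w (f i)))
    (hrr : ∀ i j, r' i j = MvPolynomial.rename g (r (f i) (f j))) :
    wfomcSum p n w' r' = MvPolynomial.rename g (wfomcSum p n w r) ∧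
      ∀ m : σ →₀ ℕ,
        MvPolynomial.coeff (Finsupp.mapDomain (⇑g) m) (wfomcSum p n w' r') =
          MvPolynomial.coeff m (wfomcSum p n w r) := by
  have hsum : wfomcSum p n w' r' = MvPolynomial.rename g (wfomcSum p n w r) := by
    obtain rfl : w' = fun i => MvPolynomial.rename g (w (f i)) := funext hw
    obtain rfl : r' = fun i j => MvPolynomial.rename g (r (f i) (f j)) := funext₂ hrr
    rw [map_wfomcSum]
    exact wfomcSum_comp_perm p n (fun i => MvPolynomial.rename g (w i))
      (fun i j => MvPolynomial.rename g (r i j)) (fun i j => by rw [hr]) f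
  exact ⟨hsum, fun m => by rw [hsum, MvPolynomial.coeff_rename_mapDomain g g.injective]⟩

theorem wfomc_eq_of_symbolic_cellGraph_iso {σ σ' : Type*} (p n : ℕ)
    (w : Fin p → MvPolynomial σ ℝ) (r : Fin p → Fin p → MvPolynomial σ ℝ)
    (w' : Fin p → MvPolynomial σ' ℝ) (r' : Fin p → Fin p → MvPolynomial σ' ℝ)
    (hr : ∀ i j, r i j = r j i) (hr' : ∀ i j, r' i j = r' j i)
    (f : Fin p ≃ Fin p) (g : σ ≃ σ')
    (hw : ∀ i, w' i = MvPolynomial.rename g (w (f i)))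
    (hrr : ∀ i j, r' i j = MvPolynomial.rename g (r (f i) (f j))) :
    wfomcSum p n w' r' = MvPolynomial.rename g (wfomcSum p n w r) ∧
      ∀ m : σ →₀ ℕ,
        MvPolynomial.coeff (Finsupp.mapDomain (⇑g) m) (wfomcSum p n w' r') =
          MvPolynomial.coeff m (wfomcSum p n w r) :=
  wfomc_eq_of_symbolic_cellGraph_iso_general p n w r w' r' hr f g hw hrr
end

section
/- For every natural number n, the number of binary relations B : Fin n → Fin n → Prop satisfying (∀ x, ∃! y, B x y) ∧ (∀ x, ∃! y, B y x) ∧ (∀ x y, B x x ∨ B x y ∨ ¬ B y x) equals the number of self-inverse permutations (involutions) of Fin n, i.e., the number of σ : Equiv.Perm (Fin n) with σ * σ = 1. -/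
private lemma invol_rel_props {n : ℕ} (σ : Equiv.Perm (Fin n)) (hσ : σ * σ = 1) :
    (∀ x, ∃! y, σ x = y) ∧ (∀ x, ∃! y, σ y = x) ∧
      (∀ x y, σ x = x ∨ σ x = y ∨ ¬ σ y = x) := by
  have hinv : ∀ x, σ (σ x) = x := fun x => by
    simpa [Equiv.Perm.mul_apply] using congrArg (fun e => (e : Equiv.Perm (Fin n)) x) hσ
  refine ⟨fun x => ⟨σ x, rfl, fun y h => h.symm⟩, fun x => ⟨σ x, hinv x, ?_⟩, ?_⟩
  · intro y hy
    exact σ.injective (by rw [hy, hinv])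
  · intro x y
    by_cases hx : σ x = x
    · exact Or.inl hx
    by_cases hxy : σ x = y
    · exact Or.inr (Or.inl hxy)
    refine Or.inr (Or.inr fun hyx => hxy ?_)
    rw [← hyx, hinv]

private def involToRel {n : ℕ} (σ : {σ : Equiv.Perm (Fin n) // σ * σ = 1}) :
    {B : Fin n → Fin n → Prop //
        (∀ x, ∃! y, B x y) ∧ (∀ x, ∃! y, B y x) ∧
        (∀ x y, B x x ∨ B x y ∨ ¬ B y x)} :=
  ⟨fun x y => σ.1 x = y, invol_rel_props σ.1 σ.2⟩

theorem count_involution_relations (n : ℕ) :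
    Nat.card {B : Fin n → Fin n → Prop //
        (∀ x, ∃! y, B x y) ∧ (∀ x, ∃! y, B y x) ∧
        (∀ x y, B x x ∨ B x y ∨ ¬ B y x)} =
      Nat.card {σ : Equiv.Perm (Fin n) // σ * σ = 1} := by
  symm
  refine Nat.card_congr (Equiv.ofBijective involToRel ⟨?_, ?_⟩)
  · rintro ⟨σ, hσ⟩ ⟨τ, hτ⟩ h
    have h' := congrArg Subtype.val h
    simp only [involToRel] at h'
    apply Subtype.ext
    ext x
    have := congrFun (congrFun h' x) (σ x)
    simp only [eq_iff_iff] at this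
    exact congrArg Fin.val (this.mp trivial).symm
  · rintro ⟨B, h1, h2, h3⟩
    classical
    set f : Fin n → Fin n := fun x => (h1 x).exists.choose with hf
    have hBf : ∀ x, B x (f x) := fun x => (h1 x).exists.choose_spec
    set g : Fin n → Fin n := fun x => (h2 x).exists.choose with hg
    have hBg : ∀ x, B (g x) x := fun x => (h2 x).exists.choose_spec
    have hgf : ∀ x, g (f x) = x := fun x => (h2 (f x)).unique (hBg (f x)) (hBf x)
    have hfg : ∀ x, f (g x) = x := fun x => (h1 (g x)).unique (hBf (g x)) (hBg x)
    have hff : ∀ x, f (f x) = x := by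
      intro x
      rcases h3 x (g x) with hxx | hxg | hng
      · have hx : f x = x := (h1 x).unique (hBf x) hxx
        rw [hx, hx]
      · have : f x = g x := (h1 x).unique (hBf x) hxg
        rw [this, hfg]
      · exact absurd (hBg x) hng
    refine ⟨⟨⟨f, g, hgf, hfg⟩, Equiv.ext fun x => ?_⟩, ?_⟩
    · show f (f x) = x
      exact hff x
    · apply Subtype.ext
      funext x y
      apply propext
      constructor
      · rintro rfl; exact hBf x
      · intro hB; exact ((h1 x).unique (hBf x) hB)
end

section
/- For every natural number n, the number of pairs (U, B) with U : Fin n → Prop and B : Fin n → Fin n → Prop satisfying (∀ x y, U x ∨ B x y) ∧ (∀ x y, ¬ U x ∨ B y x) equals Σ_{k=0}^{n} (n choose k) · 2^(k·(n−k)). This is the model count of the sentence (∀x∀y U(x) ∨ B(x,y)) ∧ (∀x∀y ¬U(x) ∨ B(y,x)), corresponding to labeled graphs with 2-colored nodes where black nodes are only connected to white nodes and vice versa (OEIS A047863). -/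
/-!
The first conjunct forces every edge out of a vertex outside `U`, the second every edge into a
vertex of `U`. So once the colouring `U` is chosen, `B` is free exactly on the `|U| · |Uᶜ|` pairs
going from `U` to `Uᶜ`, giving `2 ^ (k * (n - k))` relations for each of the `choose n k`
colourings with `|U| = k`.
-/

open Finset

theorem Nat.card_subtype_prop_imp (q : Prop) [Decidable q] :
    Nat.card {b : Prop // q → b} = if q then 1 else 2 := by
  split_ifs with hq
  · have : Unique {b : Prop // q → b} :=
      ⟨⟨⟨True, fun _ => trivial⟩⟩, fun b => Subtype.ext (by simpa [hq] using b.2)⟩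
    exact Nat.card_unique
  · simp [hq]

theorem Nat.card_subtype_forall_imp {ι : Type*} [Fintype ι] (q : ι → Prop) :
    Nat.card {f : ι → Prop // ∀ i, q i → f i} = 2 ^ Nat.card {i // ¬ q i} := by
  classical
  rw [Nat.card_congr (Equiv.subtypePiEquivPi (β := fun _ : ι => Prop) (p := fun i b => q i → b)),
    Nat.card_pi]
  simp only [Nat.card_subtype_prop_imp]
  rw [prod_ite, prod_const_one, prod_const, one_mul, Nat.card_eq_fintype_card,
    Fintype.card_subtype]

theorem Nat.card_subtype_forall₂_imp {α β : Type*} [Fintype α] [Fintype β] (q : α → β → Prop) :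
    Nat.card {f : α → β → Prop // ∀ a b, q a b → f a b} =
      2 ^ Nat.card {p : α × β // ¬ q p.1 p.2} := by
  rw [← Nat.card_subtype_forall_imp]
  exact Nat.card_congr <| (Equiv.curry α β Prop).symm.subtypeEquiv fun f => by
    simp [Prod.forall]

section

variable {α : Type*}

theorem twoColoredBipartite_iff (U : α → Prop) (B : α → α → Prop) :
    ((∀ x y, U x ∨ B x y) ∧ (∀ x y, ¬ U x ∨ B y x)) ↔ ∀ a b, (¬ U a ∨ U b) → B a b := by
  refine ⟨fun ⟨h₁, h₂⟩ a b hab => ?_, fun h => ⟨fun x y => ?_, fun x y => ?_⟩⟩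
  · exact hab.elim (fun ha => (h₁ a b).resolve_left ha)
      fun hb => (h₂ b a).resolve_left (not_not.2 hb)
  · exact or_iff_not_imp_left.2 fun hx => h x y (Or.inl hx)
  · exact or_iff_not_imp_left.2 fun hx => h y x (Or.inr (not_not.1 hx))

theorem card_twoColoredBipartite_of_colouring [Fintype α] (U : α → Prop) :
    Nat.card {B : α → α → Prop // (∀ x y, U x ∨ B x y) ∧ (∀ x y, ¬ U x ∨ B y x)} =
      2 ^ (Nat.card {a // U a} * Nat.card {a // ¬ U a}) := by
  rw [Nat.card_congr (Equiv.subtypeEquivRight (twoColoredBipartite_iff U)),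
    Nat.card_subtype_forall₂_imp, ← Nat.card_prod,
    ← Nat.card_congr Equiv.subtypeProdEquivProd]
  simp only [not_or, not_not]

theorem card_twoColoredBipartite [Fintype α] :
    Nat.card {UB : (α → Prop) × (α → α → Prop) //
        (∀ x y, UB.1 x ∨ UB.2 x y) ∧ (∀ x y, ¬ UB.1 x ∨ UB.2 y x)} =
      ∑ k ∈ range (Fintype.card α + 1),
        (Fintype.card α).choose k * 2 ^ (k * (Fintype.card α - k)) := by
  classical
  rw [Nat.card_congr (Equiv.subtypeProdEquivSigmaSubtype fun (U : α → Prop) (B : α → α → Prop) =>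
      (∀ x y, U x ∨ B x y) ∧ (∀ x y, ¬ U x ∨ B y x)), Nat.card_sigma]
  have hcompl (U : α → Prop) :
      Nat.card {a // ¬ U a} = Fintype.card α - Nat.card {a // U a} := by
    simp only [Nat.card_eq_fintype_card, Fintype.card_subtype_compl]
  have hcoe (s : Finset α) : Nat.card {a // (s : Set α) a} = #s :=
    (Nat.card_coe_set_eq _).trans (Set.ncard_coe_finset s)
  simp only [card_twoColoredBipartite_of_colouring, hcompl]
  calc ∑ U : α → Prop, 2 ^ (Nat.card {a // U a} * (Fintype.card α - Nat.card {a // U a}))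
      = ∑ s : Finset α, 2 ^ (#s * (Fintype.card α - #s)) :=
        (Fintype.sum_equiv (show Finset α ≃ (α → Prop) from Fintype.finsetEquivSet) _ _
          fun s => by rw [← hcoe s]; rfl).symm
    _ = ∑ k ∈ range (Fintype.card α + 1),
        (Fintype.card α).choose k * 2 ^ (k * (Fintype.card α - k)) := by
        rw [← powerset_univ, sum_powerset_apply_card (fun k => 2 ^ (k * (Fintype.card α - k))),
          card_univ]
        simp only [smul_eq_mul]

end

theorem count_two_colored_bipartite_like (n : ℕ) :
    Nat.card {UB : (Fin n → Prop) × (Fin n → Fin n → Prop) //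
        (∀ x y, UB.1 x ∨ UB.2 x y) ∧ (∀ x y, ¬ UB.1 x ∨ UB.2 y x)} =
      ∑ k ∈ Finset.range (n + 1), Nat.choose n k * 2 ^ (k * (n - k)) := by
  simpa only [Fintype.card_fin] using card_twoColoredBipartite (α := Fin n)
end

section
/- For every natural number n, the number of binary relations E : Fin n → Fin n → Prop satisfying ∀ x, ∃ y, E x y equals, as an integer, the signed sum over all pairs (E, Sk) with E : Fin n → Fin n → Prop and Sk : Fin n → Prop satisfying ∀ x y, ¬ E x y ∨ Sk x, of (−1) raised to the number of elements x with ¬ Sk x. That is, the Skolemization for WFOMC of ∀x ∃y E(x,y) into the universal sentence ∀x∀y (¬E(x,y) ∨ Sk(x)), where the Skolem predicate Sk carries positive weight 1 and negative weight −1, preserves the weighted first-order model count; concretely, both sides equal (2^n − 1)^n. -/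
open Finset

section Aux

open Classical

variable {n : ℕ}

private lemma weight_eq (Sk : Fin n → Prop) :
    (-1 : ℤ) ^ Nat.card {x : Fin n // ¬ Sk x} =
      ∏ x : Fin n, (if Sk x then (1 : ℤ) else -1) := by
  classical
  rw [Nat.card_eq_fintype_card, Fintype.card_subtype, Finset.prod_ite,
    Finset.prod_const, Finset.prod_const, one_pow, one_mul]

private lemma skolemInnerSum (P : Fin n → Prop) :
    (∑ Sk : Fin n → Prop,
        if ∀ x, P x → Sk x then ∏ x : Fin n, (if Sk x then (1 : ℤ) else -1) else 0)
      = if ∀ x, P x then 1 else 0 := by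
  classical
  by_cases hP : ∀ x, P x
  · have h1 : ∀ Sk : Fin n → Prop, (∀ x, P x → Sk x) ↔ Sk = fun _ => True := by
      intro Sk
      constructor
      · intro h
        funext x
        simp [h x (hP x)]
      · rintro rfl x _
        trivial
    have h2 : (∑ Sk : Fin n → Prop,
        if ∀ x, P x → Sk x then ∏ x : Fin n, (if Sk x then (1 : ℤ) else -1) else 0)
        = ∑ Sk : Fin n → Prop,
            if Sk = (fun _ => True) then ∏ x : Fin n, (if Sk x then (1 : ℤ) else -1) else 0 :=
      Finset.sum_congr rfl (fun Sk _ => if_congr (h1 Sk) rfl rfl)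
    rw [h2, Finset.sum_ite_eq' Finset.univ (fun _ => True)
      (fun Sk => ∏ x : Fin n, (if Sk x then (1 : ℤ) else -1))]
    simp [hP]
  · push_neg at hP
    obtain ⟨x0, hx0⟩ := hP
    rw [if_neg (fun h => hx0 (h x0))]
    -- flip the value of Sk at x0
    have hinv : Function.Involutive
        (fun (Sk : Fin n → Prop) => fun x => if x = x0 then ¬ Sk x else Sk x) := by
      intro Sk
      funext x
      by_cases h : x = x0 <;> simp [h, not_not]
    set e : (Fin n → Prop) ≃ (Fin n → Prop) := hinv.toPerm _ with he
    set f : (Fin n → Prop) → ℤ := fun Sk =>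
      if ∀ x, P x → Sk x then ∏ x : Fin n, (if Sk x then (1 : ℤ) else -1) else 0 with hf
    have key : ∀ Sk : Fin n → Prop, f (e Sk) = - f Sk := by
      intro Sk
      have hcond : (∀ x, P x → (e Sk) x) ↔ (∀ x, P x → Sk x) := by
        constructor
        · intro h x hx
          have := h x hx
          have hxne : x ≠ x0 := fun hh => hx0 (hh ▸ hx)
          simpa [he, Function.Involutive.toPerm, hxne] using this
        · intro h x hx
          have hxne : x ≠ x0 := fun hh => hx0 (hh ▸ hx)
          simpa [he, Function.Involutive.toPerm, hxne] using h x hx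
      have hprod : (∏ x : Fin n, (if (e Sk) x then (1 : ℤ) else -1))
          = - ∏ x : Fin n, (if Sk x then (1 : ℤ) else -1) := by
        rw [← Finset.mul_prod_erase Finset.univ _ (Finset.mem_univ x0),
          ← Finset.mul_prod_erase Finset.univ (fun x => if Sk x then (1 : ℤ) else -1)
            (Finset.mem_univ x0)]
        have h1 : (∏ x ∈ Finset.univ.erase x0, (if (e Sk) x then (1 : ℤ) else -1))
            = ∏ x ∈ Finset.univ.erase x0, (if Sk x then (1 : ℤ) else -1) := by
          refine Finset.prod_congr rfl (fun x hx => ?_)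
          have hxne : x ≠ x0 := (Finset.mem_erase.mp hx).1
          simp [he, Function.Involutive.toPerm, hxne]
        rw [h1]
        have h2 : (if (e Sk) x0 then (1 : ℤ) else -1) = - (if Sk x0 then (1 : ℤ) else -1) := by
          have : (e Sk) x0 ↔ ¬ Sk x0 := by
            simp [he, Function.Involutive.toPerm]
          by_cases h : Sk x0 <;> simp [this, h]
        rw [h2, neg_mul]
      simp only [hf]
      by_cases h : ∀ x, P x → Sk x
      · rw [if_pos (hcond.mpr h), if_pos h, hprod]
      · rw [if_neg (fun hh => h (hcond.mp hh)), if_neg h, neg_zero]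
    have hsum : ∑ Sk : Fin n → Prop, f Sk = - ∑ Sk : Fin n → Prop, f Sk := by
      conv_lhs => rw [← Equiv.sum_comp e f]
      rw [Finset.sum_congr rfl (fun Sk _ => key Sk), Finset.sum_neg_distrib]
    have : ∑ Sk : Fin n → Prop, f Sk = 0 := by linarith
    exact this

private lemma cond_iff (E : Fin n → Fin n → Prop) (Sk : Fin n → Prop) :
    (∀ x y, ¬ E x y ∨ Sk x) ↔ ∀ x, (∃ y, E x y) → Sk x := by
  constructor
  · rintro h x ⟨y, hy⟩
    rcases h x y with h' | h'
    · exact absurd hy h'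
    · exact h'
  · intro h x y
    by_cases hE : E x y
    · exact Or.inr (h x ⟨y, hE⟩)
    · exact Or.inl hE

end Aux

theorem skolemization_preserves_wfomc (n : ℕ) :
    ((Nat.card {E : Fin n → Fin n → Prop // ∀ x, ∃ y, E x y} : ℤ) =
      ∑ᶠ p : {q : (Fin n → Fin n → Prop) × (Fin n → Prop) //
          ∀ x y, ¬ q.1 x y ∨ q.2 x},
        (-1 : ℤ) ^ Nat.card {x : Fin n // ¬ (p : (Fin n → Fin n → Prop) × (Fin n → Prop)).2 x}) ∧
    Nat.card {E : Fin n → Fin n → Prop // ∀ x, ∃ y, E x y} = (2 ^ n - 1) ^ n := by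
  classical
  constructor
  · -- Part 1
    rw [finsum_eq_sum_of_fintype]
    set cond : (Fin n → Fin n → Prop) × (Fin n → Prop) → Prop :=
      fun q => ∀ x y, ¬ q.1 x y ∨ q.2 x with hcond
    set w : (Fin n → Fin n → Prop) × (Fin n → Prop) → ℤ :=
      fun q => (-1 : ℤ) ^ Nat.card {x : Fin n // ¬ q.2 x} with hw
    have h1 : (∑ p : {q // cond q}, w p.val)
        = ∑ q ∈ Finset.univ.filter cond, w q := by
      exact (Finset.sum_subtype (p := cond) (Finset.univ.filter cond) (fun q => by simp) w).symm
    have h2 : (∑ q ∈ Finset.univ.filter cond, w q)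
        = ∑ q : (Fin n → Fin n → Prop) × (Fin n → Prop), if cond q then w q else 0 := by
      rw [Finset.sum_filter]
    rw [h1, h2, Fintype.sum_prod_type]
    have h3 : ∀ E : Fin n → Fin n → Prop,
        (∑ Sk : Fin n → Prop, if cond (E, Sk) then w (E, Sk) else 0)
          = if ∀ x, ∃ y, E x y then 1 else 0 := by
      intro E
      have := skolemInnerSum (fun x => ∃ y, E x y)
      refine Eq.trans (Finset.sum_congr rfl fun Sk _ => ?_) (this.trans ?_)
      · by_cases h : cond (E, Sk)
        · rw [if_pos h, if_pos ((cond_iff E Sk).mp h)]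
          exact weight_eq Sk
        · rw [if_neg h, if_neg (fun hh => h ((cond_iff E Sk).mpr hh))]
      · by_cases hE : ∀ x, ∃ y, E x y
        · rw [if_pos hE, if_pos hE]
        · rw [if_neg hE, if_neg hE]
    rw [Finset.sum_congr rfl (fun E _ => h3 E)]
    rw [Finset.sum_boole]
    rw [Nat.card_eq_fintype_card, Fintype.card_subtype]
  · -- Part 2
    have e2 : {E : Fin n → Fin n → Prop // ∀ x, ∃ y, E x y}
        ≃ (Fin n → {f : Fin n → Prop // ∃ y, f y}) :=
      { toFun := fun E x => ⟨E.1 x, E.2 x⟩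
        invFun := fun g => ⟨fun x => (g x).1, fun x => (g x).2⟩
        left_inv := fun E => rfl
        right_inv := fun g => rfl }
    rw [Nat.card_congr e2, Nat.card_eq_fintype_card, Fintype.card_fun]
    have hone : Fintype.card {f : Fin n → Prop // ¬ ∃ y, f y} = 1 := by
      rw [Fintype.card_eq_one_iff]
      refine ⟨⟨fun _ => False, by simp⟩, ?_⟩
      rintro ⟨f, hf⟩
      apply Subtype.ext
      funext x
      push_neg at hf
      simp [hf x]
    have hcompl : Fintype.card {f : Fin n → Prop // ¬ ∃ y, f y}
        = Fintype.card (Fin n → Prop) - Fintype.card {f : Fin n → Prop // ∃ y, f y} :=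
      Fintype.card_subtype_compl _
    rw [hone] at hcompl
    have hle : Fintype.card {f : Fin n → Prop // ∃ y, f y} ≤ Fintype.card (Fin n → Prop) :=
      Fintype.card_subtype_le _
    have htot : Fintype.card (Fin n → Prop) = 2 ^ n := by
      rw [Fintype.card_fun, Fintype.card_prop, Fintype.card_fin]
    rw [htot] at hcompl hle
    have hpos : 1 ≤ 2 ^ n := Nat.one_le_two_pow
    have hcard : Fintype.card {f : Fin n → Prop // ∃ y, f y} = 2 ^ n - 1 := by
      obtain ⟨A, hA⟩ : ∃ A, Fintype.card {f : Fin n → Prop // ∃ y, f y} = A := ⟨_, rfl⟩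
      rw [hA] at hcompl hle ⊢
      obtain ⟨B, hB⟩ : ∃ B, (2 : ℕ) ^ n = B := ⟨_, rfl⟩
      rw [hB] at hcompl hle hpos ⊢
      clear hA hB hone htot e2
      omega
    rw [hcard, Fintype.card_fin]
end
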